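/- arXiv:0706.3338 — 2 statements merged into one kernel-verified Lean document; each statement's English description precedes it below -/
import Mathlib

section
/- (Lemma 1) Every M_H-group can be embedded into an M¹_H-group: if G = G(P) for an M_H-presentation P = ⟨x, H; R⟩, then there exist an M¹_H-presentation P̂ = ⟨x̂, H; R̂⟩ and an injective group homomorphism μ : G → G(P̂). Moreover μ can be chosen so that G is a retract of G(P̂) (there is ρ : G(P̂) → G with ρ ∘ μ = id_G) and μ ∘ ν = ν̂, where ν, ν̂ are the natural homomorphisms from H. -/
open Monoid

section Defs
variable {X Y H : Type*}

/-- `φ_W^θ(j)`: the sum `Σ_{i=1}^{j} ε_i θ(x_i)` of the weights of the first `j`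
letters of the word `W` (a word is a nonempty list of pairs (letter, exponent sign)). -/
def phiW (θ : X → ℤ) (W : List (X × Bool)) (j : ℕ) : ℤ :=
  ((W.take j).map fun p => if p.2 then θ p.1 else -θ p.1).sum

/-- A weight function: a map `θ : X → ℤ` whose image generates the additive group `ℤ`. -/
def IsWeightFun (θ : X → ℤ) : Prop :=
  AddSubgroup.closure (Set.range θ) = ⊤

/-- A strict weight function: `θ x ≠ 0` for all `x`. -/
def IsStrictWeight (θ : X → ℤ) : Prop := ∀ x, θ x ≠ 0

/-- `θ` is admissible for `W` if `φ(r) = 0` where `r` is the length of `W`. -/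
def IsAdmissible (θ : X → ℤ) (W : List (X × Bool)) : Prop :=
  phiW θ W W.length = 0

/-- The successor of an index, cyclically (subscripts mod `r`). -/
def succIdx (W : List (X × Bool)) (k : Fin W.length) : Fin W.length :=
  ⟨(k.1 + 1) % W.length, Nat.mod_lt _ k.pos⟩

/-- `W` has the unique max-min property with respect to the weight function `θ`:
`θ` is a strict weight function, admissible for `W`, the graph of `W` has a unique
maximum at `k` and a unique minimum at `l`, and `W` is reduced at the maximum and
minimum (`x_k ≠ x_{k+1}`, `x_l ≠ x_{l+1}`, subscripts mod `r`). -/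
def UniqueMaxMinWith (θ : X → ℤ) (W : List (X × Bool)) : Prop :=
  W ≠ [] ∧ IsWeightFun θ ∧ IsStrictWeight θ ∧ IsAdmissible θ W ∧
  ∃ k l : Fin W.length,
    (∀ j : Fin W.length, j ≠ k → phiW θ W (j.1 + 1) < phiW θ W (k.1 + 1)) ∧
    (∀ j : Fin W.length, j ≠ l → phiW θ W (l.1 + 1) < phiW θ W (j.1 + 1)) ∧
    (W.get k).1 ≠ (W.get (succIdx W k)).1 ∧
    (W.get l).1 ≠ (W.get (succIdx W l)).1

/-- `W` has the unique max-min property: it has it with respect to some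
admissible strict weight function. -/
def HasUniqueMaxMin (W : List (X × Bool)) : Prop :=
  ∃ θ : X → ℤ, UniqueMaxMinWith θ W

/-- The `x`-skeleton of a relator `R = x₁^{ε₁} h₁ ⋯ x_r^{ε_r} h_r`
(encoded as the list of triples `(xᵢ, εᵢ, hᵢ)`): the word `x₁^{ε₁} ⋯ x_r^{ε_r}`. -/
def skel (R : List (X × Bool × H)) : List (X × Bool) :=
  R.map fun t => (t.1, t.2.1)

variable [Group H]

/-- The element of the free product `H ∗ F(X)` represented by the relator
`R = x₁^{ε₁} h₁ ⋯ x_r^{ε_r} h_r`. -/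
def relWord (R : List (X × Bool × H)) : Coprod H (FreeGroup X) :=
  (R.map fun t => Coprod.inr (FreeGroup.mk [(t.1, t.2.1)]) * Coprod.inl t.2.2).prod

/-- The group `G(P)` defined by the relative one-relator presentation
`P = ⟨x, H; R⟩`: the quotient of `H ∗ F(X)` by the normal closure of `R`. -/
def relGroup (R : List (X × Bool × H)) : Type _ :=
  Coprod H (FreeGroup X) ⧸ Subgroup.normalClosure {relWord R}

instance (R : List (X × Bool × H)) : Group (relGroup R) :=
  QuotientGroup.Quotient.group _

/-- The natural homomorphism `ν : H → G(P)`. -/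
def natHom (R : List (X × Bool × H)) : H →* relGroup R :=
  (QuotientGroup.mk' _).comp Coprod.inl

end Defs

/-!
Replace each generator `x` by `n = |θ x|` new generators `y_{x,0}, …, y_{x,n-1}` through
`x ↦ y_{x,0}^s ⋯ y_{x,n-1}^s`, `s = sign (θ x)`. With the constant weight `1` the graph of the new
skeleton takes the values of the old graph at the block boundaries and moves monotonically inside
each block, so the unique maximum and minimum survive; they sit at the last letter of the block of
`x_k` (resp. `x_l`), whose successor is the first letter of the next block, a generator coming from
`x_{k+1} ≠ x_k`. The substitution is split by `y_{x,0} ↦ x^s`, `y_{x,i} ↦ 1` for `i > 0`; both maps fix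
`H` and carry the relators to each other, so they induce `μ` and its retraction `ρ`.
-/

def IsUniqueMaxAt (f : ℕ → ℤ) (r k : ℕ) : Prop :=
  ∀ j < r, j ≠ k → f (j + 1) < f (k + 1)

theorem isUniqueMaxAt_iff_forall_fin {f : ℕ → ℤ} {r : ℕ} (k : Fin r) :
    IsUniqueMaxAt f r k ↔ ∀ j : Fin r, j ≠ k → f (j + 1) < f (k + 1) :=
  ⟨fun h j hjk => h j j.2 (Fin.val_injective.ne hjk),
    fun h j hj hjk => h ⟨j, hj⟩ fun e => hjk (congrArg Fin.val e)⟩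

theorem Nat.exists_le_lt_succ_of_le_of_lt {N : ℕ → ℕ} {p : ℕ} :
    ∀ {r : ℕ}, N 0 ≤ p → p < N r → ∃ j < r, N j ≤ p ∧ p < N (j + 1)
  | 0, h0, hr => absurd h0 (Nat.not_le.2 hr)
  | r + 1, h0, hr => by
    by_cases hp : p < N r
    · obtain ⟨j, hj, hjp⟩ := Nat.exists_le_lt_succ_of_le_of_lt h0 hp
      exact ⟨j, by omega, hjp⟩
    · exact ⟨r, by omega, Nat.not_lt.1 hp, hr⟩

theorem IsUniqueMaxAt.of_refinement {f g : ℕ → ℤ} {N : ℕ → ℕ} {r k : ℕ}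
    (hf : IsUniqueMaxAt f r k) (hk : k < r) (hcyc : f 0 = f r)
    (hN0 : N 0 = 0) (hN : ∀ i j, i < j → j ≤ r → N i < N j)
    (hnode : ∀ j ≤ r, g (N j) = f j)
    (hinner : ∀ j < r, ∀ p, N j < p → p < N (j + 1) → g p < max (f j) (f (j + 1))) :
    IsUniqueMaxAt g (N r) (N (k + 1) - 1) := by
  obtain ⟨r, rfl⟩ : ∃ r', r = r' + 1 := ⟨r - 1, by omega⟩
  have hle_succ : ∀ j < r + 1, f (j + 1) ≤ f (k + 1) := fun j hj => by
    rcases eq_or_ne j k with rfl | hjk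
    exacts [le_rfl, (hf j hj hjk).le]
  have hle : ∀ j ≤ r + 1, f j ≤ f (k + 1) := fun j hj => by
    rcases j with _ | j
    exacts [hcyc ▸ hle_succ r (by omega), hle_succ j (by omega)]
  have hNk : 0 < N (k + 1) := hN0 ▸ hN 0 (k + 1) (by omega) (by omega)
  intro p hp hpk
  rw [Nat.sub_add_cancel hNk, hnode (k + 1) (by omega)]
  obtain ⟨j, hj, hjp, hpj⟩ := Nat.exists_le_lt_succ_of_le_of_lt (by rw [hN0]; exact p.zero_le) hp
  rcases (show p + 1 ≤ N (j + 1) from hpj).lt_or_eq with hlt | heq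
  · exact (hinner j hj (p + 1) (by omega) hlt).trans_le (max_le (hle j hj.le) (hle (j + 1) hj))
  · rw [heq, hnode (j + 1) hj]
    exact hf j hj fun hjk => hpk (by subst hjk; omega)

section Expansion

variable {X : Type*} (θ : X → ℤ)

def weightBlock (x : X) : List ((X × ℕ) × Bool) :=
  (List.range (θ x).natAbs).map fun i => ((x, i), decide (0 < θ x))

def expandLetter (p : X × Bool) : List ((X × ℕ) × Bool) :=
  if p.2 then weightBlock θ p.1 else FreeGroup.invRev (weightBlock θ p.1)

def expandWord (W : List (X × Bool)) : List ((X × ℕ) × Bool) :=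
  W.flatMap (expandLetter θ)

def blockStart (W : List (X × Bool)) (j : ℕ) : ℕ :=
  (expandWord θ (W.take j)).length

def blockSign (p : X × Bool) : ℤ :=
  if p.2 = decide (0 < θ p.1) then 1 else -1

variable {θ}

theorem length_expandLetter (p : X × Bool) : (expandLetter θ p).length = (θ p.1).natAbs := by
  unfold expandLetter weightBlock FreeGroup.invRev
  split <;> simp

theorem fst_fst_of_mem_expandLetter {p : X × Bool} {q : (X × ℕ) × Bool}
    (hq : q ∈ expandLetter θ p) : q.1.1 = p.1 := by
  unfold expandLetter weightBlock FreeGroup.invRev at hq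
  split at hq <;> simp only [List.mem_reverse, List.mem_map, List.mem_range] at hq
  · obtain ⟨i, -, rfl⟩ := hq
    rfl
  · obtain ⟨_, ⟨i, -, rfl⟩, rfl⟩ := hq
    rfl

theorem map_sign_expandLetter (p : X × Bool) :
    (expandLetter θ p).map (fun q => if q.2 then (1 : ℤ) else -1)
      = List.replicate (θ p.1).natAbs (blockSign θ p) := by
  rw [List.eq_replicate_iff, List.length_map, length_expandLetter]
  refine ⟨rfl, ?_⟩
  unfold expandLetter blockSign weightBlock FreeGroup.invRev
  rcases p with ⟨x, _ | _⟩ <;> by_cases hx : 0 < θ x <;> simp [hx]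

theorem blockSign_mul_natAbs (p : X × Bool) :
    blockSign θ p * (θ p.1).natAbs = if p.2 then θ p.1 else -θ p.1 := by
  rcases p with ⟨x, _ | _⟩ <;> by_cases hx : 0 < θ x <;>
    simp [blockSign, abs_of_pos, abs_of_nonpos, not_lt.1, *]

theorem sum_map_sign_expandWord (V : List (X × Bool)) :
    ((expandWord θ V).map fun q => if q.2 then (1 : ℤ) else -1).sum
      = (V.map fun p => if p.2 then θ p.1 else -θ p.1).sum := by
  induction V with
  | nil => rfl
  | cons p V ih =>
    rw [expandWord, List.flatMap_cons, List.map_append, List.sum_append, ← expandWord, ih,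
      map_sign_expandLetter, List.sum_replicate, nsmul_eq_mul, mul_comm, blockSign_mul_natAbs,
      List.map_cons, List.sum_cons]

theorem take_blockStart (W : List (X × Bool)) (j : ℕ) :
    (expandWord θ W).take (blockStart θ W j) = expandWord θ (W.take j) := by
  have hsplit : expandWord θ W = expandWord θ (W.take j) ++ expandWord θ (W.drop j) := by
    rw [expandWord, expandWord, expandWord, ← List.flatMap_append, List.take_append_drop]
  rw [hsplit, blockStart, List.take_left]

theorem phiW_one_blockStart (W : List (X × Bool)) (j : ℕ) :
    phiW (fun _ => 1) (expandWord θ W) (blockStart θ W j) = phiW θ W j := by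
  rw [phiW, take_blockStart, sum_map_sign_expandWord, phiW]

theorem blockStart_length (W : List (X × Bool)) :
    blockStart θ W W.length = (expandWord θ W).length := by
  rw [blockStart, List.take_length]

theorem expandWord_eq_append {W : List (X × Bool)} {j : ℕ} (hj : j < W.length) :
    expandWord θ W
      = expandWord θ (W.take j) ++ (expandLetter θ W[j] ++ expandWord θ (W.drop (j + 1))) := by
  conv_lhs => rw [← W.take_append_drop j, List.drop_eq_getElem_cons hj]
  simp only [expandWord, List.flatMap_append, List.flatMap_cons]

theorem blockStart_succ {W : List (X × Bool)} {j : ℕ} (hj : j < W.length) :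
    blockStart θ W (j + 1) = blockStart θ W j + (θ W[j].1).natAbs := by
  rw [blockStart, blockStart, List.take_add_one, List.getElem?_eq_getElem hj, Option.toList_some,
    expandWord, List.flatMap_append, List.length_append, List.flatMap_singleton,
    length_expandLetter, expandWord]

theorem phiW_one_blockStart_add {W : List (X × Bool)} {j d : ℕ} (hj : j < W.length)
    (hd : d ≤ (θ W[j].1).natAbs) :
    phiW (fun _ => 1) (expandWord θ W) (blockStart θ W j + d)
      = phiW θ W j + blockSign θ W[j] * d := by
  have h := phiW_one_blockStart (θ := θ) W j
  rw [phiW, take_blockStart] at h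
  rw [phiW, expandWord_eq_append hj, List.take_append, blockStart, List.take_of_length_le
    (by omega), Nat.add_sub_cancel_left, List.take_append_of_le_length
    (by rw [length_expandLetter]; exact hd), List.map_append, List.sum_append, h,
    List.map_take, map_sign_expandLetter, List.take_replicate, List.sum_replicate,
    min_eq_left hd, nsmul_eq_mul, mul_comm]

theorem fst_fst_getElem_expandWord {W : List (X × Bool)} {j d : ℕ} (hj : j < W.length)
    (hd : d < (θ W[j].1).natAbs) (h : blockStart θ W j + d < (expandWord θ W).length) :
    (expandWord θ W)[blockStart θ W j + d].1.1 = W[j].1 := by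
  apply fst_fst_of_mem_expandLetter (p := W[j])
  rw [List.getElem_of_eq (expandWord_eq_append hj) h, List.getElem_append_right
    (by simp [blockStart]), List.getElem_append_left (by simp [blockStart, length_expandLetter, hd])]
  exact List.getElem_mem _

end Expansion

theorem isWeightFun_const_one {ι : Type*} [Nonempty ι] : IsWeightFun fun _ : ι => (1 : ℤ) := by
  rw [IsWeightFun, Set.range_const, Int.addSubgroupClosure_one]

section StrictWeight

variable {X : Type*} {θ : X → ℤ} {W : List (X × Bool)}

theorem blockStart_zero : blockStart θ W 0 = 0 := rfl

theorem blockSign_eq_one_or_neg_one (p : X × Bool) : blockSign θ p = 1 ∨ blockSign θ p = -1 := by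
  unfold blockSign
  split <;> simp

theorem blockStart_lt_blockStart (hs : IsStrictWeight θ) {i j : ℕ} (hij : i < j)
    (hj : j ≤ W.length) : blockStart θ W i < blockStart θ W j := by
  induction j, hij using Nat.le_induction with
  | base =>
    have := Int.natAbs_pos.2 (hs W[i].1)
    rw [blockStart_succ (by omega)]
    omega
  | succ j hij ih =>
    have := ih (by omega)
    rw [blockStart_succ (by omega)]
    omega

theorem blockStart_le_length (hs : IsStrictWeight θ) {j : ℕ} (hj : j ≤ W.length) :
    blockStart θ W j ≤ (expandWord θ W).length := by
  rw [← blockStart_length]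
  rcases hj.lt_or_eq with h | rfl
  exacts [(blockStart_lt_blockStart hs h le_rfl).le, le_rfl]

theorem phiW_one_expandWord_strictly_between {j p : ℕ} (hj : j < W.length)
    (hjp : blockStart θ W j < p) (hpj : p < blockStart θ W (j + 1)) :
    min (phiW θ W j) (phiW θ W (j + 1)) < phiW (fun _ => 1) (expandWord θ W) p ∧
      phiW (fun _ => 1) (expandWord θ W) p < max (phiW θ W j) (phiW θ W (j + 1)) := by
  obtain ⟨d, rfl⟩ : ∃ d, p = blockStart θ W j + d := ⟨p - blockStart θ W j, by omega⟩
  rw [blockStart_succ hj] at hpj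
  have hend := phiW_one_blockStart_add (θ := θ) hj le_rfl
  rw [← blockStart_succ hj, phiW_one_blockStart] at hend
  rw [hend, phiW_one_blockStart_add hj (by omega), min_lt_iff, lt_max_iff]
  rcases blockSign_eq_one_or_neg_one (θ := θ) W[j] with h | h <;> rw [h] <;> omega

theorem blockStart_succ_mod_length (hs : IsStrictWeight θ) {k : ℕ} (hk : k < W.length) :
    blockStart θ W (k + 1) % (expandWord θ W).length = blockStart θ W ((k + 1) % W.length) := by
  rw [← blockStart_length]
  rcases (show k + 1 ≤ W.length from hk).lt_or_eq with h | h
  · rw [Nat.mod_eq_of_lt h, Nat.mod_eq_of_lt (blockStart_lt_blockStart hs h le_rfl)]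
  · rw [h, Nat.mod_self, Nat.mod_self, blockStart_zero]

/-- The last letter of the block of `x_k` and the first letter of the next block
are expansions of `x_k` and `x_{k+1}`. -/
theorem expandWord_fst_ne_of_fst_ne (hs : IsStrictWeight θ) {k : Fin W.length}
    (hred : (W.get k).1 ≠ (W.get (succIdx W k)).1)
    (hk : blockStart θ W (k + 1) - 1 < (expandWord θ W).length) :
    ((expandWord θ W).get ⟨_, hk⟩).1 ≠ ((expandWord θ W).get (succIdx _ ⟨_, hk⟩)).1 := by
  have hn := Int.natAbs_pos.2 (hs W[k.1].1)
  have hsucc := blockStart_succ (θ := θ) k.2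
  have hlast : ((expandWord θ W).get ⟨_, hk⟩).1.1 = (W.get k).1 := by
    have := fst_fst_getElem_expandWord (θ := θ) k.2 (d := (θ W[k.1].1).natAbs - 1) (by omega) (by omega)
    simp only [List.get_eq_getElem]
    convert this using 4
    omega
  have hnext : ((expandWord θ W).get (succIdx _ ⟨_, hk⟩)).1.1 = (W.get (succIdx W k)).1 := by
    have hmod := blockStart_succ_mod_length hs k.2
    have := fst_fst_getElem_expandWord (Nat.mod_lt (k + 1) k.pos) (d := 0) (Int.natAbs_pos.2 (hs _))
      (by rw [Nat.add_zero, ← hmod]; exact Nat.mod_lt _ (by omega))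
    simp only [Nat.add_zero] at this
    simp only [List.get_eq_getElem, succIdx]
    convert this using 4
    rw [Nat.sub_add_cancel (by omega), hmod]
  exact fun h => hred (hlast ▸ hnext ▸ congrArg Prod.fst h)

end StrictWeight

theorem UniqueMaxMinWith.one_expandWord {X : Type*} {θ : X → ℤ} {W : List (X × Bool)}
    (h : UniqueMaxMinWith θ W) : UniqueMaxMinWith (fun _ => 1) (expandWord θ W) := by
  obtain ⟨-, -, hs, hadm, k, l, hk, hl, hkred, hlred⟩ := h
  have hN := fun i j (hij : i < j) (hj : j ≤ W.length) => blockStart_lt_blockStart hs hij hj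
  have hcyc : phiW θ W 0 = phiW θ W W.length := by rw [hadm]; rfl
  have hnode : ∀ j ≤ W.length,
      phiW (fun _ => 1) (expandWord θ W) (blockStart θ W j) = phiW θ W j :=
    fun j _ => phiW_one_blockStart W j
  have hmax := ((isUniqueMaxAt_iff_forall_fin k).2 hk).of_refinement k.2 hcyc blockStart_zero hN
    hnode fun j hj _ hjp hpj => (phiW_one_expandWord_strictly_between hj hjp hpj).2
  have hmin := ((isUniqueMaxAt_iff_forall_fin (f := fun j => -phiW θ W j) l).2
      fun j hj => neg_lt_neg (hl j hj)).of_refinement l.2 (congrArg Neg.neg hcyc) blockStart_zero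
    hN (fun j hj => congrArg Neg.neg (hnode j hj)) fun j hj _ hjp hpj => by
      rw [max_neg_neg]
      exact neg_lt_neg (phiW_one_expandWord_strictly_between hj hjp hpj).1
  rw [blockStart_length] at hmax hmin
  have hpos : ∀ k : Fin W.length, blockStart θ W (k + 1) - 1 < (expandWord θ W).length :=
    fun k => by
      have h0 : blockStart θ W 0 < blockStart θ W (k + 1) := hN 0 (k + 1) (by omega) k.2
      have := blockStart_le_length hs (W := W) (j := k + 1) k.2
      rw [blockStart_zero] at h0
      omega
  have : Nonempty (X × ℕ) := ⟨((W.get k).1, 0)⟩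
  refine ⟨List.ne_nil_of_length_pos (Nat.zero_lt_of_lt (hpos k)), isWeightFun_const_one,
    fun _ => one_ne_zero, ?_, ⟨_, hpos k⟩, ⟨_, hpos l⟩,
    (isUniqueMaxAt_iff_forall_fin _).1 hmax,
    fun j hj => neg_lt_neg_iff.1 ((isUniqueMaxAt_iff_forall_fin _).1 hmin j hj),
    expandWord_fst_ne_of_fst_ne hs hkred _, expandWord_fst_ne_of_fst_ne hs hlred _⟩
  rw [IsAdmissible, ← blockStart_length, phiW_one_blockStart, hadm]

section Relator

variable {X Y H : Type*} [Group H]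

def attachLast (h : H) : List (Y × Bool) → List (Y × Bool × H)
  | [] => []
  | [p] => [(p.1, p.2, h)]
  | p :: q :: L => (p.1, p.2, 1) :: attachLast h (q :: L)

theorem skel_attachLast (h : H) (L : List (Y × Bool)) : skel (attachLast h L) = L := by
  induction L with
  | nil => rfl
  | cons p L ih =>
    cases L with
    | nil => rfl
    | cons q L => exact congrArg (p :: ·) ih

theorem relWord_cons (t : Y × Bool × H) (R : List (Y × Bool × H)) :
    relWord (t :: R) = Coprod.inr (FreeGroup.mk [(t.1, t.2.1)]) * Coprod.inl t.2.2 * relWord R := by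
  simp [relWord, mul_assoc]

theorem relWord_append (R S : List (Y × Bool × H)) :
    relWord (R ++ S) = relWord R * relWord S := by
  simp [relWord]

theorem relWord_attachLast (h : H) {L : List (Y × Bool)} (hL : L ≠ []) :
    relWord (attachLast h L) = Coprod.inr (FreeGroup.mk L) * Coprod.inl h := by
  induction L with
  | nil => exact absurd rfl hL
  | cons p L ih =>
    cases L with
    | nil => simp [attachLast, relWord]
    | cons q L =>
      rw [attachLast, relWord_cons, ih (List.cons_ne_nil q L), map_one, mul_one, ← mul_assoc,
        ← map_mul, FreeGroup.mul_mk, List.singleton_append]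

def expandRelator (θ : X → ℤ) (R : List (X × Bool × H)) : List ((X × ℕ) × Bool × H) :=
  R.flatMap fun t => attachLast t.2.2 (expandLetter θ (t.1, t.2.1))

theorem skel_expandRelator (θ : X → ℤ) (R : List (X × Bool × H)) :
    skel (expandRelator θ R) = expandWord θ (skel R) := by
  simp only [expandRelator, expandWord, skel, List.map_flatMap, List.flatMap_map]
  exact congrArg (R.flatMap ·) (funext fun t => skel_attachLast _ _)

end Relator

section FreeGroup

variable {X : Type*} (θ : X → ℤ)

def expandHom : FreeGroup X →* FreeGroup (X × ℕ) :=
  FreeGroup.lift fun x => FreeGroup.mk (weightBlock θ x)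

def collapseHom : FreeGroup (X × ℕ) →* FreeGroup X :=
  FreeGroup.lift fun y =>
    if y.2 = 0 then (if 0 < θ y.1 then FreeGroup.of y.1 else (FreeGroup.of y.1)⁻¹) else 1

variable {θ}

theorem expandHom_mk_singleton (p : X × Bool) :
    expandHom θ (FreeGroup.mk [p]) = FreeGroup.mk (expandLetter θ p) := by
  rcases p with ⟨x, _ | _⟩ <;> simp [expandHom, expandLetter, FreeGroup.lift_mk, FreeGroup.inv_mk]

theorem collapseHom_comp_expandHom (hs : IsStrictWeight θ) :
    (collapseHom θ).comp (expandHom θ) = MonoidHom.id (FreeGroup X) := by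
  refine FreeGroup.ext_hom _ _ fun x => ?_
  obtain ⟨n, hn⟩ : ∃ n, (θ x).natAbs = n + 1 := ⟨_, (Nat.succ_pred_eq_of_pos
    (Int.natAbs_pos.2 (hs x))).symm⟩
  by_cases hx : 0 < θ x <;>
    simp [expandHom, collapseHom, weightBlock, hn, List.range_succ_eq_map, FreeGroup.lift_mk, Function.comp_def, hx]

end FreeGroup

section Embedding

variable {X Y H : Type*} [Group H]

theorem map_relWord_expandRelator {θ : X → ℤ} (hs : IsStrictWeight θ) (R : List (X × Bool × H)) :
    Coprod.map (MonoidHom.id H) (expandHom θ) (relWord R) = relWord (expandRelator θ R) := by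
  induction R with
  | nil => simp [relWord, expandRelator]
  | cons t R ih =>
    have hne : expandLetter θ (t.1, t.2.1) ≠ [] :=
      List.ne_nil_of_length_pos (by rw [length_expandLetter]; exact Int.natAbs_pos.2 (hs _))
    rw [expandRelator, List.flatMap_cons, ← expandRelator, relWord_cons, map_mul, map_mul, ih,
      relWord_append, relWord_attachLast _ hne, Coprod.map_apply_inl, Coprod.map_apply_inr,
      expandHom_mk_singleton, MonoidHom.id_apply]

theorem exists_retraction_relGroup {R : List (X × Bool × H)} {R' : List (Y × Bool × H)}
    (f : FreeGroup X →* FreeGroup Y) (g : FreeGroup Y →* FreeGroup X)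
    (hgf : g.comp f = MonoidHom.id _)
    (hR : Coprod.map (MonoidHom.id H) f (relWord R) = relWord R') :
    ∃ (μ : relGroup R →* relGroup R') (ρ : relGroup R' →* relGroup R),
      Function.Injective μ ∧ ρ.comp μ = MonoidHom.id _ ∧ μ.comp (natHom R) = natHom R' := by
  set Φ := Coprod.map (MonoidHom.id H) f
  set Ψ := Coprod.map (MonoidHom.id H) g
  have hΨΦ : Ψ.comp Φ = MonoidHom.id _ := by
    rw [Coprod.map_comp_map, hgf, MonoidHom.id_comp, Coprod.map_id_id]
  have hR' : Ψ (relWord R') = relWord R := by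
    rw [← hR, ← MonoidHom.comp_apply, hΨΦ, MonoidHom.id_apply]
  let μ : relGroup R →* relGroup R' := QuotientGroup.map _ _ Φ
    (by simpa [hR] using Subgroup.comap_normalClosure_image_ge {relWord R} Φ)
  let ρ : relGroup R' →* relGroup R := QuotientGroup.map _ _ Ψ
    (by simpa [hR'] using Subgroup.comap_normalClosure_image_ge {relWord R'} Ψ)
  have hρμ : ρ.comp μ = MonoidHom.id _ :=
    QuotientGroup.monoidHom_ext _ <| MonoidHom.ext fun x =>
      congrArg QuotientGroup.mk (DFunLike.congr_fun hΨΦ x)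
  refine ⟨μ, ρ, Function.LeftInverse.injective (DFunLike.congr_fun hρμ), hρμ, ?_⟩
  exact MonoidHom.ext fun h => congrArg QuotientGroup.mk (Coprod.map_apply_inl _ _ h)

end Embedding

universe u v

/-- **Lemma 1** (Pride). Every `M_H`-group embeds into an `M¹_H`-group: if
`G = G(P)` for an `M_H`-presentation `P = ⟨x, H; R⟩`, then there is a presentation
`P̂ = ⟨x̂, H; R̂⟩` whose skeleton has the unique max-min property with respect to the
constant weight function `1`, together with an injective homomorphism
`μ : G → G(P̂)` which has a retraction `ρ` and satisfies `μ ∘ ν = ν̂`. -/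
theorem exists_M1_embedding {X : Type u} {H : Type v} [Group H]
    (R : List (X × Bool × H)) (hP : HasUniqueMaxMin (skel R)) :
    ∃ (X' : Type u) (R' : List (X' × Bool × H)),
      UniqueMaxMinWith (fun _ => (1 : ℤ)) (skel R') ∧
      ∃ (μ : relGroup R →* relGroup R') (ρ : relGroup R' →* relGroup R),
        Function.Injective μ ∧
        ρ.comp μ = MonoidHom.id (relGroup R) ∧
        μ.comp (natHom R) = natHom R' := by
  obtain ⟨θ, hθ⟩ := hP
  have hs : IsStrictWeight θ := hθ.2.2.1
  refine ⟨X × ℕ, expandRelator θ R, ?_, ?_⟩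
  · rw [skel_expandRelator]
    exact hθ.one_expandWord
  · exact exists_retraction_relGroup _ _ (collapseHom_comp_expandHom hs)
      (map_relWord_expandRelator hs R)
end

section
/- (Remark 2) Every M_H-group is a retract of an S¹_H-group: if G = G(P) for an M_H-presentation P = ⟨x, H; R⟩, then there exist an S¹_H-presentation P' = ⟨x', H; R'⟩ and homomorphisms μ : G → G(P'), ρ : G(P') → G with ρ ∘ μ = id_G (and μ injective). -/
open Monoid

/-- `W` has the *strong* unique max-min property with respect to `θ`: the unique
max-min property where moreover the set of (two) letters occurring at the unique
maximum meets the set of letters occurring at the unique minimum. -/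
def StrongUniqueMaxMinWith {X : Type*} (θ : X → ℤ) (W : List (X × Bool)) : Prop :=
  W ≠ [] ∧ IsWeightFun θ ∧ IsStrictWeight θ ∧ IsAdmissible θ W ∧
  ∃ k l : Fin W.length,
    (∀ j : Fin W.length, j ≠ k → phiW θ W (j.1 + 1) < phiW θ W (k.1 + 1)) ∧
    (∀ j : Fin W.length, j ≠ l → phiW θ W (l.1 + 1) < phiW θ W (j.1 + 1)) ∧
    (W.get k).1 ≠ (W.get (succIdx W k)).1 ∧
    (W.get l).1 ≠ (W.get (succIdx W l)).1 ∧
    (({(W.get k).1, (W.get (succIdx W k)).1} ∩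
      {(W.get l).1, (W.get (succIdx W l)).1} : Set X).Nonempty)

/-!
Replace each letter `x^ε` of the relator by a block of `|2θ(x)|` letters of weight one, all with
the exponent sign of `εθ(x)`: one copy of `x`, the others copies of a new letter `t`. The
substitution `x ↦ block(x)` of `H ∗ F(x)` into `H ∗ F(x, t)` has the left inverse `t ↦ 1`,
`x ↦ x^{sign θ(x)}` and sends `R` to the new relator `R'`, so it induces a retraction of `G(P')`
onto `G(P)`. Along each block the new height function runs linearly from `2φ(j)` to `2φ(j+1)`,
so the unique maximum and minimum of `φ` survive at block boundaries. Whether `x` stands first or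
last in its block is decided by a colouring `q` separating `x_k` from `x_{k+1}` and `x_l` from
`x_{l+1}`; then each extremal corner carries exactly one `t`, which is the strong property.
-/

namespace OneRelator

open Set

section Heights

variable {X : Type*} {θ : X → ℤ} {W A B : List (X × Bool)} {j d : ℕ}

variable (θ) in
def letterWeight (p : X × Bool) : ℤ := if p.2 then θ p.1 else -θ p.1

theorem phiW_eq_sum (θ : X → ℤ) (W : List (X × Bool)) (j : ℕ) :
    phiW θ W j = ((W.take j).map (letterWeight θ)).sum := rfl

theorem phiW_succ (hj : j < W.length) : phiW θ W (j + 1) = phiW θ W j + letterWeight θ W[j] := by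
  rw [phiW_eq_sum, phiW_eq_sum, List.take_add_one, List.getElem?_eq_getElem hj,
    List.map_append, List.sum_append]
  simp

theorem phiW_take_length (θ : X → ℤ) (W : List (X × Bool)) (j : ℕ) :
    phiW θ (W.take j) (W.take j).length = phiW θ W j := by
  rw [phiW_eq_sum, phiW_eq_sum, List.take_length]

theorem phiW_append_of_le (h : j ≤ A.length) : phiW θ (A ++ B) j = phiW θ A j := by
  rw [phiW_eq_sum, phiW_eq_sum, List.take_append_of_le_length h]

theorem phiW_append_length_add :
    phiW θ (A ++ B) (A.length + d) = phiW θ A A.length + phiW θ B d := by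
  simp [phiW_eq_sum, List.take_append, List.take_of_length_le]

end Heights

section StrictExtremum

variable {α : Type*} [LinearOrder α] {f g : ℕ → α} {r K : ℕ}

theorem le_of_strictMax_of_closed (hK : K ∈ Icc 1 r) (hclosed : f 0 = f r)
    (hmax : ∀ i ∈ Icc 1 r, i ≠ K → f i < f K) : ∀ i ≤ r, f i ≤ f K := by
  have hr : f r ≤ f K := by
    rcases eq_or_ne r K with h | h
    · rw [h]
    · exact (hmax r ⟨hK.1.trans hK.2, le_rfl⟩ h).le
  intro i hi
  rcases Nat.eq_zero_or_pos i with rfl | hi0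
  · rwa [hclosed]
  rcases eq_or_ne i K with rfl | h
  · exact le_rfl
  · exact (hmax i ⟨hi0, hi⟩ h).le

theorem strictMax_of_interpolation {o : ℕ → ℕ} (ho : o 0 = 0) (hK : K ≤ r)
    (hnode : ∀ j ≤ r, g (o j) = f j)
    (hbetween : ∀ j < r, ∀ i, o j < i → i < o (j + 1) → g i < max (f j) (f (j + 1)))
    (hle : ∀ j ≤ r, f j ≤ f K) (hmax : ∀ i ∈ Icc 1 r, i ≠ K → f i < f K) :
    ∀ i ∈ Icc 1 (o r), i ≠ o K → g i < g (o K) := by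
  intro i ⟨hi1, hir⟩ hiK
  have hr : 0 < r := Nat.pos_of_ne_zero fun h => by rw [h, ho] at hir; omega
  have hex : ∃ j, i ≤ o (j + 1) := ⟨r - 1, by rwa [Nat.sub_add_cancel hr]⟩
  classical
  obtain ⟨hj, hjmin⟩ := (Nat.find_eq_iff hex).mp rfl
  set j := Nat.find hex
  have hjr : j < r := by
    by_contra! h
    exact hjmin (r - 1) (by omega) (by rwa [Nat.sub_add_cancel hr])
  have hoj : o j < i := by
    rcases Nat.eq_zero_or_pos j with h0 | hpos
    · rw [h0, ho]; omega
    · have := hjmin (j - 1) (by omega)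
      rw [Nat.sub_add_cancel hpos] at this
      omega
  rw [hnode K hK]
  rcases hj.lt_or_eq with hlt | heq
  · exact (hbetween j hjr i hoj hlt).trans_le (max_le (hle j hjr.le) (hle (j + 1) hjr))
  · rw [heq, hnode (j + 1) hjr]
    exact hmax (j + 1) ⟨by omega, hjr⟩ (fun h => hiK (by rw [heq, h]))

theorem lt_succ_and_succ_mod_lt_of_strictMax {k : ℕ} (hr : 2 ≤ r) (hk : k < r)
    (hclosed : f 0 = f r) (hmax : ∀ i ∈ Icc 1 r, i ≠ k + 1 → f i < f (k + 1)) :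
    f k < f (k + 1) ∧ f ((k + 1) % r + 1) < f ((k + 1) % r) := by
  constructor
  · rcases Nat.eq_zero_or_pos k with rfl | hk0
    · rw [hclosed]; exact hmax r ⟨by omega, le_rfl⟩ (by omega)
    · exact hmax k ⟨hk0, hk.le⟩ (by omega)
  · by_cases hlt : k + 1 < r
    · rw [Nat.mod_eq_of_lt hlt]; exact hmax (k + 2) ⟨by omega, hlt⟩ (by omega)
    · obtain rfl : r = k + 1 := by omega
      rw [Nat.mod_self, zero_add, hclosed]
      exact hmax 1 ⟨le_rfl, by omega⟩ (by omega)

theorem strictMax_Icc_of_fin {n : ℕ} {k : Fin n}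
    (h : ∀ j : Fin n, j ≠ k → f (j + 1) < f (k + 1)) :
    ∀ i ∈ Icc 1 n, i ≠ k + 1 → f i < f (k + 1) := by
  intro i ⟨hi1, hin⟩ hik
  have := h ⟨i - 1, by omega⟩ fun h' => hik (by rw [← h']; simp only; omega)
  rwa [Nat.sub_add_cancel hi1] at this

theorem exists_fin_of_strictMax_Icc {n : ℕ} (hK : K ∈ Icc 1 n)
    (h : ∀ i ∈ Icc 1 n, i ≠ K → f i < f K) :
    ∃ k : Fin n, k.1 + 1 = K ∧ ∀ j : Fin n, j ≠ k → f (j + 1) < f (k + 1) := by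
  obtain ⟨hK1, hKn⟩ := hK
  refine ⟨⟨K - 1, by omega⟩, by simp only; omega, fun j hj => ?_⟩
  have hK' : K - 1 + 1 = K := by omega
  rw [hK']
  exact h (j + 1) ⟨by omega, j.isLt⟩ (fun h' => hj (Fin.ext (by simp only; omega)))

end StrictExtremum

section BlockOffset

variable {α β : Type*} {B : α → List β} {V : List α} {j d : ℕ}

variable (B) in
def blockOffset (V : List α) (j : ℕ) : ℕ := ((V.take j).flatMap B).length

theorem blockOffset_zero : blockOffset B V 0 = 0 := rfl

theorem blockOffset_length : blockOffset B V V.length = (V.flatMap B).length := by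
  rw [blockOffset, List.take_length]

theorem flatMap_eq_take_append (hj : j < V.length) :
    V.flatMap B = (V.take j).flatMap B ++ (B V[j] ++ (V.drop (j + 1)).flatMap B) := by
  conv_lhs => rw [← List.take_append_drop j V, List.drop_eq_getElem_cons hj]
  rw [List.flatMap_append, List.flatMap_cons]

theorem blockOffset_succ (hj : j < V.length) :
    blockOffset B V (j + 1) = blockOffset B V j + (B V[j]).length := by
  rw [blockOffset, blockOffset, List.take_add_one, List.getElem?_eq_getElem hj,
    List.flatMap_append]
  simp

theorem blockOffset_le_length (j : ℕ) : blockOffset B V j ≤ (V.flatMap B).length := by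
  conv_rhs => rw [← List.take_append_drop j V, List.flatMap_append, List.length_append]
  exact Nat.le_add_right _ _

theorem blockOffset_lt_length (hB : ∀ a, B a ≠ []) (hj : j < V.length) :
    blockOffset B V j < (V.flatMap B).length := by
  have h := blockOffset_le_length (B := B) (V := V) (j + 1)
  rw [blockOffset_succ hj] at h
  have := List.length_pos_iff.mpr (hB V[j])
  omega

theorem blockOffset_succ_mod (hB : ∀ a, B a ≠ []) (hj : j < V.length) :
    blockOffset B V (j + 1) % (V.flatMap B).length = blockOffset B V ((j + 1) % V.length) := by
  by_cases hlt : j + 1 < V.length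
  · rw [Nat.mod_eq_of_lt hlt, Nat.mod_eq_of_lt (blockOffset_lt_length hB hlt)]
  · rw [show j + 1 = V.length by omega, Nat.mod_self, blockOffset_length, Nat.mod_self,
      blockOffset_zero]

theorem getElem_flatMap_blockOffset_add (hj : j < V.length) (hd : d < (B V[j]).length) :
    (V.flatMap B)[blockOffset B V j + d]'(by
      have := blockOffset_le_length (B := B) (V := V) (j + 1)
      rw [blockOffset_succ hj] at this; omega) = (B V[j])[d] := by
  simp only [List.getElem_of_eq (flatMap_eq_take_append hj), blockOffset]
  rw [List.getElem_append_right (by omega)]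
  simp only [Nat.add_sub_cancel_left]
  rw [List.getElem_append_left]

end BlockOffset

section FlatMapHeights

variable {X Y : Type*} {θ : X → ℤ} {θ' : Y → ℤ} {c : ℤ}
  {B : X × Bool → List (Y × Bool)} {V : List (X × Bool)} {j d : ℕ}

theorem phiW_flatMap_length (hB : ∀ p, phiW θ' (B p) (B p).length = c * letterWeight θ p) :
    ∀ V : List (X × Bool), phiW θ' (V.flatMap B) (V.flatMap B).length = c * phiW θ V V.length
  | [] => by simp [phiW]
  | p :: V => by
    rw [List.flatMap_cons, List.length_append, phiW_append_length_add, hB,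
      phiW_flatMap_length hB V]
    simp only [phiW_eq_sum, List.take_length, List.map_cons, List.sum_cons]
    ring

theorem phiW_flatMap_blockOffset (hB : ∀ p, phiW θ' (B p) (B p).length = c * letterWeight θ p)
    (j : ℕ) : phiW θ' (V.flatMap B) (blockOffset B V j) = c * phiW θ V j := by
  have hsplit : V.flatMap B = (V.take j).flatMap B ++ (V.drop j).flatMap B := by
    rw [← List.flatMap_append, List.take_append_drop]
  rw [blockOffset, hsplit, phiW_append_of_le le_rfl, phiW_flatMap_length hB, phiW_take_length]

theorem phiW_flatMap_blockOffset_add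
    (hB : ∀ p, phiW θ' (B p) (B p).length = c * letterWeight θ p)
    (hj : j < V.length) (hd : d ≤ (B V[j]).length) :
    phiW θ' (V.flatMap B) (blockOffset B V j + d) = c * phiW θ V j + phiW θ' (B V[j]) d := by
  rw [flatMap_eq_take_append hj, blockOffset, phiW_append_length_add, phiW_append_of_le hd,
    phiW_flatMap_length hB, phiW_take_length]

theorem phiW_one_of_forall_snd_eq {L : List (Y × Bool)} {s : Bool} (hL : ∀ a ∈ L, a.2 = s)
    (i : ℕ) : phiW (fun _ => (1 : ℤ)) L i = (if s then 1 else -1) * min i L.length := by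
  have h : (L.take i).map (letterWeight fun _ => (1 : ℤ))
      = List.replicate (min i L.length) (if s then 1 else -1) := by
    refine List.eq_replicate_iff.mpr ⟨by simp, fun b hb => ?_⟩
    obtain ⟨p, hp, rfl⟩ := List.mem_map.mp hb
    rw [letterWeight, hL p (List.mem_of_mem_take hp)]
  rw [phiW_eq_sum, h, List.sum_replicate, nsmul_eq_mul, mul_comm]

end FlatMapHeights

section Corner

variable {X Y : Type*} {B : X × Bool → List (Y × Bool)} {V : List (X × Bool)}

theorem get_flatMap_of_succ_eq_blockOffset (hB : ∀ a, B a ≠ []) (k : Fin V.length)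
    (k' : Fin (V.flatMap B).length) (hk' : k'.1 + 1 = blockOffset B V (k + 1)) :
    (V.flatMap B).get k' = (B V[k.1]).getLast (hB _) ∧
      (V.flatMap B).get (succIdx _ k') = (B V[(succIdx V k).1]).head (hB _) := by
  have hlen := List.length_pos_iff.mpr (hB V[k.1])
  have hsucc := blockOffset_succ (B := B) k.isLt
  constructor
  · have hidx : k'.1 = blockOffset B V k + ((B V[k.1]).length - 1) := by omega
    simp only [List.get_eq_getElem, hidx]
    rw [getElem_flatMap_blockOffset_add k.isLt (by omega), List.getLast_eq_getElem]
  · have hidx : (succIdx _ k').1 = blockOffset B V (succIdx V k) + 0 := by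
      simp only [succIdx, hk', blockOffset_succ_mod hB k.isLt, add_zero]
    simp only [List.get_eq_getElem, hidx]
    rw [getElem_flatMap_blockOffset_add (succIdx V k).isLt
      (List.length_pos_iff.mpr (hB _)), List.head_eq_getElem]

end Corner

section Block

variable {X : Type*} (θ : X → ℤ) (q : X → Bool)

def blockDir (p : X × Bool) : Bool := if 0 < θ p.1 then p.2 else !p.2

-- `none` is the new letter `t`. Putting `x` last exactly when `q x = s` makes the block of
-- `x⁻¹` the formal inverse of the block of `x` (`block_not`).
def blockLetters (x : X) (s : Bool) : List (Option X) :=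
  if q x = s then List.replicate ((2 * θ x).natAbs - 1) none ++ [some x]
  else some x :: List.replicate ((2 * θ x).natAbs - 1) none

def block (p : X × Bool) : List (Option X × Bool) :=
  (blockLetters θ q p.1 (blockDir θ p)).map fun y => (y, blockDir θ p)

variable {θ q} {x : X} {p p' : X × Bool}

theorem length_blockLetters (hx : θ x ≠ 0) (s : Bool) :
    (blockLetters θ q x s).length = (2 * θ x).natAbs := by
  have : 0 < (2 * θ x).natAbs := by positivity
  unfold blockLetters
  split <;> simp <;> omega

theorem length_block (hp : θ p.1 ≠ 0) : (block θ q p).length = (2 * θ p.1).natAbs := by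
  rw [block, List.length_map, length_blockLetters hp]

theorem block_ne_nil (hp : θ p.1 ≠ 0) : block θ q p ≠ [] := by
  rw [← List.length_pos_iff, length_block hp]
  positivity

theorem phiW_block (hp : θ p.1 ≠ 0) (i : ℕ) :
    phiW (fun _ => (1 : ℤ)) (block θ q p) i
      = (if blockDir θ p then 1 else -1) * min i (2 * θ p.1).natAbs := by
  rw [phiW_one_of_forall_snd_eq (s := blockDir θ p), length_block hp]
  intro a ha
  obtain ⟨y, -, rfl⟩ := List.mem_map.mp ha
  rfl

theorem two_mul_letterWeight (hp : θ p.1 ≠ 0) :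
    2 * letterWeight θ p = (if blockDir θ p then 1 else -1) * (2 * θ p.1).natAbs := by
  obtain ⟨x, ε⟩ := p
  dsimp only at hp ⊢
  rw [Int.natCast_natAbs]
  rcases (Ne.lt_or_gt hp : θ x < 0 ∨ 0 < θ x) with h | h
  · rw [abs_of_neg (by omega)]
    cases ε <;> simp [letterWeight, blockDir, h.not_gt]
  · rw [abs_of_pos (by omega)]
    cases ε <;> simp [letterWeight, blockDir, h]

theorem phiW_block_length (hp : θ p.1 ≠ 0) :
    phiW (fun _ => (1 : ℤ)) (block θ q p) (block θ q p).length = 2 * letterWeight θ p := by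
  rw [phiW_block hp, two_mul_letterWeight hp, length_block hp, min_self]

theorem blockDir_eq_decide (hp : θ p.1 ≠ 0) :
    blockDir θ p = decide (0 < letterWeight θ p) := by
  obtain ⟨x, ε⟩ := p
  dsimp only at hp
  rcases (Ne.lt_or_gt hp : θ x < 0 ∨ 0 < θ x) with h | h
  · cases ε <;> simp [letterWeight, blockDir, h.not_gt, h]
  · cases ε <;> simp [letterWeight, blockDir, h, h.le]

theorem phiW_block_mem_Ioo (hp : θ p.1 ≠ 0) {d : ℕ} (hd0 : 0 < d)
    (hd : d < (block θ q p).length) :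
    min 0 (2 * letterWeight θ p) < phiW (fun _ => (1 : ℤ)) (block θ q p) d ∧
      phiW (fun _ => (1 : ℤ)) (block θ q p) d < max 0 (2 * letterWeight θ p) := by
  rw [length_block hp] at hd
  rw [phiW_block hp, two_mul_letterWeight hp, min_eq_left hd.le]
  generalize (2 * θ p.1).natAbs = m at hd ⊢
  cases blockDir θ p <;> simp <;> omega

theorem fst_head_block (hp : θ p.1 ≠ 0) :
    ((block θ q p).head (block_ne_nil hp)).1
      = if q p.1 = blockDir θ p then none else some p.1 := by
  have : 2 ≤ (2 * θ p.1).natAbs := by omega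
  simp only [block, blockLetters, List.head_map]
  split <;> simp [List.head_append]; omega

theorem fst_getLast_block (hp : θ p.1 ≠ 0) :
    ((block θ q p).getLast (block_ne_nil hp)).1
      = if q p.1 = blockDir θ p then some p.1 else none := by
  have : 2 ≤ (2 * θ p.1).natAbs := by omega
  rw [List.getLast_eq_getElem]
  simp only [block, blockLetters, List.getElem_map]
  split
  · simp
  · simp [List.getElem_cons, show (2 * θ p.1).natAbs - 1 ≠ 0 by omega]

theorem fst_getLast_block_ne_fst_head_block (hp : θ p.1 ≠ 0) (hp' : θ p'.1 ≠ 0)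
    (hdir : blockDir θ p' = !blockDir θ p) (hq : q p.1 ≠ q p'.1) :
    ((block θ q p).getLast (block_ne_nil hp)).1 ≠ ((block θ q p').head (block_ne_nil hp')).1 ∧
      none ∈ ({((block θ q p).getLast (block_ne_nil hp)).1,
        ((block θ q p').head (block_ne_nil hp')).1} : Set (Option X)) := by
  rw [fst_getLast_block hp, fst_head_block hp', hdir]
  revert hq
  cases q p.1 <;> cases q p'.1 <;> cases blockDir θ p <;> simp

end Block

theorem exists_bool_ne_ne {α : Type*} {a b c d : α} (hab : a ≠ b) (hcd : c ≠ d) :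
    ∃ q : α → Bool, q a ≠ q b ∧ q c ≠ q d := by
  classical
  by_cases hbc : b = c
  · subst hbc
    exact ⟨fun x => decide (x = b), by simp [hab], by simp [Ne.symm hcd]⟩
  by_cases hda : d = a
  · subst hda
    exact ⟨fun x => decide (x = d), by simp [Ne.symm hab], by simp [hcd]⟩
  · refine ⟨fun x => decide (x = a ∨ x = c), by simp [Ne.symm hab, hbc], ?_⟩
    simp [hda, Ne.symm hcd]

theorem isWeightFun_const_one {Y : Type*} [Nonempty Y] : IsWeightFun fun _ : Y => (1 : ℤ) := by
  rw [IsWeightFun, Set.range_const, ← AddSubgroup.zmultiples_eq_closure, Int.zmultiples_one]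

section Expansion

variable {X : Type*} {θ : X → ℤ} {q : X → Bool} {W : List (X × Bool)} {j i K : ℕ}

local notation "φ'" => phiW (fun _ => (1 : ℤ)) (W.flatMap (block θ q))
local notation "o" => blockOffset (block θ q) W

theorem phiW_flatMap_block_blockOffset (hs : IsStrictWeight θ) (j : ℕ) :
    φ' (o j) = 2 * phiW θ W j :=
  phiW_flatMap_blockOffset (fun p => phiW_block_length (hs p.1)) j

theorem phiW_flatMap_block_mem_Ioo (hs : IsStrictWeight θ) (hj : j < W.length) (hi : o j < i)
    (hi' : i < o (j + 1)) :
    min (2 * phiW θ W j) (2 * phiW θ W (j + 1)) < φ' i ∧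
      φ' i < max (2 * phiW θ W j) (2 * phiW θ W (j + 1)) := by
  rw [blockOffset_succ hj] at hi'
  obtain ⟨d, rfl⟩ := Nat.exists_eq_add_of_lt hi
  have hd := phiW_block_mem_Ioo (q := q) (hs W[j].1) (d := d + 1) (by omega) (by omega)
  rw [add_assoc, phiW_flatMap_blockOffset_add (B := block θ q)
    (fun p => phiW_block_length (hs p.1)) hj (by omega),
    phiW_succ hj]
  constructor <;> simp only [min_def, max_def] at hd ⊢ <;> split_ifs at hd ⊢ <;> omega

theorem strictMax_flatMap_block (hs : IsStrictWeight θ) (hadm : IsAdmissible θ W)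
    (hK : K ∈ Icc 1 W.length)
    (hmax : ∀ i ∈ Icc 1 W.length, i ≠ K → phiW θ W i < phiW θ W K) :
    ∀ i ∈ Icc 1 (W.flatMap (block θ q)).length, i ≠ o K → φ' i < φ' (o K) := by
  rw [← blockOffset_length]
  refine strictMax_of_interpolation (f := fun j => 2 * phiW θ W j) blockOffset_zero hK.2
    (fun j _ => phiW_flatMap_block_blockOffset hs j)
    (fun j hj i h₁ h₂ => (phiW_flatMap_block_mem_Ioo hs hj h₁ h₂).2)
    (fun j hj => ?_) (fun i hi hiK => by simpa using hmax i hi hiK)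
  simpa using le_of_strictMax_of_closed hK hadm.symm hmax j hj

theorem strictMin_flatMap_block (hs : IsStrictWeight θ) (hadm : IsAdmissible θ W)
    (hK : K ∈ Icc 1 W.length)
    (hmin : ∀ i ∈ Icc 1 W.length, i ≠ K → phiW θ W K < phiW θ W i) :
    ∀ i ∈ Icc 1 (W.flatMap (block θ q)).length, i ≠ o K → φ' (o K) < φ' i := by
  rw [← blockOffset_length]
  -- the maximum argument, read in `ℤᵒᵈ`
  refine strictMax_of_interpolation (f := fun j => OrderDual.toDual (2 * phiW θ W j))
    (g := fun i => OrderDual.toDual (φ' i)) blockOffset_zero hK.2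
    (fun j _ => congrArg _ (phiW_flatMap_block_blockOffset hs j))
    (fun j hj i h₁ h₂ => (phiW_flatMap_block_mem_Ioo hs hj h₁ h₂).1)
    (fun j hj => ?_) (fun i hi hiK => OrderDual.toDual_lt_toDual.mpr (by linarith [hmin i hi hiK]))
  have := OrderDual.toDual_le_toDual.mp <| le_of_strictMax_of_closed
    (f := fun j => OrderDual.toDual (phiW θ W j)) hK hadm.symm hmin j hj
  exact OrderDual.toDual_le_toDual.mpr (by linarith)

theorem two_le_length_of_fst_get_ne {k : Fin W.length}
    (hk : (W.get k).1 ≠ (W.get (succIdx W k)).1) : 2 ≤ W.length := by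
  by_contra h
  have h1 : W.length = 1 := by have := k.isLt; omega
  refine hk (congrArg _ (congrArg _ (Fin.ext ?_)))
  simp only [succIdx, h1, Nat.mod_one]
  have := k.isLt
  omega

theorem blockDir_of_strictMax (hs : IsStrictWeight θ) (hadm : IsAdmissible θ W)
    (hr : 2 ≤ W.length) (k : Fin W.length)
    (hmax : ∀ i ∈ Icc 1 W.length, i ≠ k + 1 → phiW θ W i < phiW θ W (k + 1)) :
    blockDir θ W[k.1] = true ∧ blockDir θ W[(succIdx W k).1] = false := by
  obtain ⟨h₁, h₂⟩ := lt_succ_and_succ_mod_lt_of_strictMax hr k.isLt hadm.symm hmax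
  replace h₂ : phiW θ W ((succIdx W k).1 + 1) < phiW θ W (succIdx W k).1 := h₂
  rw [phiW_succ k.isLt] at h₁
  rw [phiW_succ (succIdx W k).isLt] at h₂
  rw [blockDir_eq_decide (hs _), blockDir_eq_decide (hs _)]
  simp only [decide_eq_true_eq, decide_eq_false_iff_not, not_lt]
  omega

theorem blockDir_of_strictMin (hs : IsStrictWeight θ) (hadm : IsAdmissible θ W)
    (hr : 2 ≤ W.length) (l : Fin W.length)
    (hmin : ∀ i ∈ Icc 1 W.length, i ≠ l + 1 → phiW θ W (l + 1) < phiW θ W i) :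
    blockDir θ W[l.1] = false ∧ blockDir θ W[(succIdx W l).1] = true := by
  obtain ⟨h₁, h₂⟩ := lt_succ_and_succ_mod_lt_of_strictMax
    (f := fun i => OrderDual.toDual (phiW θ W i)) hr l.isLt (congrArg _ hadm.symm) hmin
  replace h₁ : phiW θ W (l.1 + 1) < phiW θ W l := h₁
  replace h₂ : phiW θ W (succIdx W l).1 < phiW θ W ((succIdx W l).1 + 1) := h₂
  rw [phiW_succ l.isLt] at h₁
  rw [phiW_succ (succIdx W l).isLt] at h₂
  rw [blockDir_eq_decide (hs _), blockDir_eq_decide (hs _)]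
  simp only [decide_eq_true_eq, decide_eq_false_iff_not, not_lt]
  omega

theorem fst_get_flatMap_block_corner (hs : IsStrictWeight θ) (k : Fin W.length)
    (hdir : blockDir θ W[(succIdx W k).1] = !blockDir θ W[k.1])
    (hq : q (W.get k).1 ≠ q (W.get (succIdx W k)).1) (k' : Fin (W.flatMap (block θ q)).length)
    (hk' : k'.1 + 1 = blockOffset (block θ q) W (k + 1)) :
    let W' := W.flatMap (block θ q)
    (W'.get k').1 ≠ (W'.get (succIdx W' k')).1 ∧
      none ∈ ({(W'.get k').1, (W'.get (succIdx W' k')).1} : Set (Option X)) := by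
  obtain ⟨h₁, h₂⟩ :=
    get_flatMap_of_succ_eq_blockOffset (fun p => block_ne_nil (hs p.1)) k k' hk'
  simp only
  rw [h₁, h₂]
  exact fst_getLast_block_ne_fst_head_block (hs _) (hs _) hdir hq

theorem exists_strongUniqueMaxMinWith_flatMap_block (h : UniqueMaxMinWith θ W) :
    ∃ q : X → Bool, StrongUniqueMaxMinWith (fun _ => (1 : ℤ)) (W.flatMap (block θ q)) := by
  obtain ⟨hne, -, hs, hadm, k, l, hmax, hmin, hk, hl⟩ := h
  obtain ⟨q, hqk, hql⟩ := exists_bool_ne_ne hk hl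
  refine ⟨q, ?_⟩
  have hr := two_le_length_of_fst_get_ne hk
  have hB : ∀ p, block θ q p ≠ [] := fun p => block_ne_nil (hs p.1)
  have hmaxℕ := strictMax_Icc_of_fin hmax
  have hminℕ := strictMax_Icc_of_fin (f := fun i => OrderDual.toDual (phiW θ W i)) hmin
  have hoffset (j : Fin W.length) :
      blockOffset (block θ q) W (j + 1) ∈ Icc 1 (W.flatMap (block θ q)).length := by
    have := List.length_pos_iff.mpr (hB W[j.1])
    rw [blockOffset_succ j.isLt]
    exact ⟨by omega, blockOffset_succ j.isLt ▸ blockOffset_le_length _⟩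
  obtain ⟨k', hk'o, hk'⟩ := exists_fin_of_strictMax_Icc (hoffset k)
    (strictMax_flatMap_block hs hadm ⟨by omega, k.isLt⟩ hmaxℕ)
  obtain ⟨l', hl'o, hl'⟩ := exists_fin_of_strictMax_Icc
    (f := fun i => OrderDual.toDual (phiW (fun _ => (1 : ℤ)) (W.flatMap (block θ q)) i))
    (hoffset l) (strictMin_flatMap_block hs hadm ⟨by omega, l.isLt⟩ hminℕ)
  obtain ⟨hdk, hdk'⟩ := blockDir_of_strictMax hs hadm hr k hmaxℕ
  obtain ⟨hdl, hdl'⟩ := blockDir_of_strictMin hs hadm hr l hminℕ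
  obtain ⟨hk'ne, hk'none⟩ :=
    fst_get_flatMap_block_corner hs k (by rw [hdk, hdk']; rfl) hqk k' hk'o
  obtain ⟨hl'ne, hl'none⟩ :=
    fst_get_flatMap_block_corner hs l (by rw [hdl, hdl']; rfl) hql l' hl'o
  refine ⟨?_, isWeightFun_const_one, fun _ => one_ne_zero, ?_, k', l', hk', hl', hk'ne, hl'ne,
    none, hk'none, hl'none⟩
  · exact List.ne_nil_of_length_pos
      ((Nat.zero_le _).trans_lt (blockOffset_lt_length hB (List.length_pos_iff.mpr hne)))
  · rw [IsAdmissible, ← blockOffset_length, phiW_flatMap_block_blockOffset hs, hadm, mul_zero]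

end Expansion

section Relator

variable {Y H : Type*} [Group H]

def attachLast (h : H) : List (Y × Bool) → List (Y × Bool × H)
  | [] => []
  | [p] => [(p.1, p.2, h)]
  | p :: a :: L => (p.1, p.2, 1) :: attachLast h (a :: L)

theorem skel_attachLast (h : H) : ∀ L : List (Y × Bool), skel (attachLast h L) = L
  | [] => rfl
  | [_] => rfl
  | p :: a :: L => congrArg (p :: ·) (skel_attachLast h (a :: L))

theorem relWord_cons (t : Y × Bool × H) (R : List (Y × Bool × H)) :
    relWord (t :: R) = Coprod.inr (FreeGroup.mk [(t.1, t.2.1)]) * Coprod.inl t.2.2 * relWord R := by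
  rw [relWord, List.map_cons, List.prod_cons, relWord]

theorem relWord_append (R S : List (Y × Bool × H)) :
    relWord (R ++ S) = relWord R * relWord S := by
  rw [relWord, List.map_append, List.prod_append, relWord, relWord]

theorem relWord_attachLast (h : H) : ∀ L : List (Y × Bool), L ≠ [] →
    relWord (attachLast h L) = Coprod.inr (FreeGroup.mk L) * Coprod.inl h
  | [], hL => absurd rfl hL
  | [_], _ => by simp [attachLast, relWord]
  | p :: a :: L, _ => by
    rw [attachLast, relWord_cons, relWord_attachLast h (a :: L) (List.cons_ne_nil _ _), map_one,
      mul_one, ← mul_assoc, ← map_mul, FreeGroup.mul_mk]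
    rfl

end Relator

section Substitution

variable {X H : Type*} [Group H] (θ : X → ℤ) (q : X → Bool)

def substHom : Coprod H (FreeGroup X) →* Coprod H (FreeGroup (Option X)) :=
  Coprod.map (.id H) (FreeGroup.lift fun x => FreeGroup.mk (block θ q (x, true)))

def retractionHom : Coprod H (FreeGroup (Option X)) →* Coprod H (FreeGroup X) :=
  Coprod.map (.id H)
    (FreeGroup.lift fun y => y.elim 1 fun x => if 0 < θ x then .of x else (.of x)⁻¹)

def expandRel (R : List (X × Bool × H)) : List (Option X × Bool × H) :=
  R.flatMap fun t => attachLast t.2.2 (block θ q (t.1, t.2.1))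

variable {θ q}

theorem block_not (x : X) (ε : Bool) :
    block θ q (x, !ε) = FreeGroup.invRev (block θ q (x, ε)) := by
  have hdir : blockDir θ (x, !ε) = !blockDir θ (x, ε) := by
    unfold blockDir; split <;> rfl
  have hletters : blockLetters θ q x (!blockDir θ (x, ε))
      = (blockLetters θ q x (blockDir θ (x, ε))).reverse := by
    unfold blockLetters
    cases q x <;> cases blockDir θ (x, ε) <;> simp
  simp only [block, hdir, hletters, FreeGroup.invRev, List.map_map, List.map_reverse]
  rfl

theorem lift_mk_singleton (p : X × Bool) :
    FreeGroup.lift (fun x => FreeGroup.mk (block θ q (x, true))) (FreeGroup.mk [p])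
      = FreeGroup.mk (block θ q p) := by
  obtain ⟨x, _ | _⟩ := p
  · rw [FreeGroup.lift_mk]
    simp [FreeGroup.inv_mk, ← block_not]
  · rw [FreeGroup.lift_mk]
    simp

theorem lift_mk_block (x : X) :
    FreeGroup.lift (fun y : Option X => y.elim 1 fun x => if 0 < θ x then .of x else (.of x)⁻¹)
      (FreeGroup.mk (block θ q (x, true))) = FreeGroup.of x := by
  have hdir : blockDir θ (x, true) = decide (0 < θ x) := by
    unfold blockDir; split <;> simp_all
  rw [FreeGroup.lift_mk, block, hdir]
  by_cases h : 0 < θ x <;> unfold blockLetters <;> split <;> simp [h]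

theorem retractionHom_comp_substHom :
    (retractionHom θ).comp (substHom θ q) = MonoidHom.id (Coprod H (FreeGroup X)) := by
  rw [retractionHom, substHom, Coprod.map_comp_map, MonoidHom.id_comp, ← Coprod.map_id_id]
  congr 1
  exact FreeGroup.ext_hom _ _ fun x => by simp [lift_mk_block x]

theorem skel_expandRel (R : List (X × Bool × H)) :
    skel (expandRel θ q R) = (skel R).flatMap (block θ q) := by
  simp only [skel, expandRel, List.map_flatMap, List.flatMap_map]
  exact congrArg (R.flatMap ·) (funext fun t => skel_attachLast t.2.2 _)

theorem relWord_expandRel (hs : IsStrictWeight θ) :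
    ∀ R : List (X × Bool × H), relWord (expandRel θ q R) = substHom θ q (relWord R)
  | [] => rfl
  | t :: R => by
    rw [expandRel, List.flatMap_cons, ← expandRel, relWord_append, relWord_expandRel hs R,
      relWord_attachLast _ _ (block_ne_nil (hs _)), relWord_cons, map_mul, map_mul, substHom,
      Coprod.map_apply_inr, Coprod.map_apply_inl, lift_mk_singleton]
    rfl

end Substitution

theorem exists_retraction_quotient_normalClosure {A B : Type*} [Group A] [Group B]
    (φ : A →* B) (ψ : B →* A) (hψφ : ψ.comp φ = .id A) {a : A} {b : B} (hab : φ a = b) :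
    ∃ (μ : A ⧸ Subgroup.normalClosure {a} →* B ⧸ Subgroup.normalClosure {b})
      (ρ : B ⧸ Subgroup.normalClosure {b} →* A ⧸ Subgroup.normalClosure {a}),
      ρ.comp μ = .id _ ∧ Function.Injective μ := by
  have hba : ψ b = a := by rw [← hab, ← MonoidHom.comp_apply, hψφ, MonoidHom.id_apply]
  have hφ := Subgroup.comap_normalClosure_image_ge {a} φ
  have hψ := Subgroup.comap_normalClosure_image_ge {b} ψ
  rw [Set.image_singleton, hab] at hφ
  rw [Set.image_singleton, hba] at hψ
  have hρμ : (QuotientGroup.map _ _ ψ hψ).comp (QuotientGroup.map _ _ φ hφ) = .id _ := by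
    refine MonoidHom.ext fun x => QuotientGroup.induction_on x fun g => ?_
    simp only [MonoidHom.comp_apply, QuotientGroup.map_mk, MonoidHom.id_apply]
    exact congrArg _ (DFunLike.congr_fun hψφ g)
  exact ⟨_, _, hρμ, Function.LeftInverse.injective (g := QuotientGroup.map _ _ ψ hψ)
    (DFunLike.congr_fun hρμ)⟩

end OneRelator

open OneRelator

universe u v

/-- **Remark 2** (Pride). Every `M_H`-group is a retract of an `S¹_H`-group: if
`G = G(P)` for an `M_H`-presentation `P = ⟨x, H; R⟩`, then there is a presentation
`P' = ⟨x', H; R'⟩` whose skeleton has the strong unique max-min property with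
respect to the constant weight function `1`, and homomorphisms `μ : G → G(P')`
(injective) and `ρ : G(P') → G` with `ρ ∘ μ = id`. -/
theorem retract_of_S1 {X : Type u} {H : Type v} [Group H]
    (R : List (X × Bool × H)) (hP : HasUniqueMaxMin (skel R)) :
    ∃ (X' : Type u) (R' : List (X' × Bool × H)),
      StrongUniqueMaxMinWith (fun _ => (1 : ℤ)) (skel R') ∧
      ∃ (μ : relGroup R →* relGroup R') (ρ : relGroup R' →* relGroup R),
        ρ.comp μ = MonoidHom.id (relGroup R) ∧ Function.Injective μ := by
  obtain ⟨θ, hθ⟩ := hP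
  have hs : IsStrictWeight θ := hθ.2.2.1
  obtain ⟨q, hstrong⟩ := exists_strongUniqueMaxMinWith_flatMap_block hθ
  refine ⟨Option X, expandRel θ q R, by rwa [skel_expandRel], ?_⟩
  exact exists_retraction_quotient_normalClosure _ _ retractionHom_comp_substHom
    (relWord_expandRel hs R).symm
end
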